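/- Let E be an effect algebra with compression base (J_p)_{p∈P} and let e, f ∈ E be b-elements with associated Boolean subalgebras B(e), B(f). Then B(e) ↔ B(f) if and only if P(e) ↔ P(f), where for sets A, B ⊆ E, A ↔ B means that every element of A is Mackey compatible with every element of B. -/
import Mathlib


/- Common definitions: effect algebras, compression bases, spectrality -/

attribute [local instance 0] Classical.propDecidable

universe u

structure EffectAlgebra (E : Type u) where
  padd : E → E → Option E
  zero : E
  one : E
  comm : ∀ a b, padd a b = padd b a
  assoc : ∀ a b c ab abc, padd a b = some ab → padd ab c = some abc →
      ∃ bc, padd b c = some bc ∧ padd a bc = some abc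
  orth_exists : ∀ a, ∃ x, padd a x = some one
  orth_unique : ∀ a x y, padd a x = some one → padd a y = some one → x = y
  add_one : ∀ a b, padd a one = some b → a = zero

namespace EffectAlgebra

variable {E : Type u} (EA : EffectAlgebra E)

/-- `a ⊥ b` and `a ⊕ b = c`. -/
def le (a b : E) : Prop := ∃ c, EA.padd a c = some b

/-- the orthosupplement `a'`. -/
noncomputable def compl (a : E) : E := (EA.orth_exists a).choose

/-- `b ⊖ a` (the element `c` with `a ⊕ c = b`, when it exists). -/
noncomputable def osub (b a : E) : E :=
  if h : ∃ c, EA.padd a c = some b then h.choose else EA.zero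

/-- the value of `a ⊕ b` (defaulting to `0` when undefined). -/
noncomputable def oplusD (a b : E) : E := (EA.padd a b).getD EA.zero

def IsSharp (a : E) : Prop := ∀ x, EA.le x a → EA.le x (EA.compl a) → x = EA.zero

/-- sub-effect algebra. -/
def SubEA (P : Set E) : Prop :=
  EA.zero ∈ P ∧ EA.one ∈ P ∧ (∀ a ∈ P, EA.compl a ∈ P) ∧
    ∀ a ∈ P, ∀ b ∈ P, ∀ c, EA.padd a b = some c → c ∈ P

/-- Mackey compatibility: `a = a₁ ⊕ c`, `b = b₁ ⊕ c` with `a₁ ⊕ b₁ ⊕ c` defined. -/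
def Mackey (a b : E) : Prop :=
  ∃ a1 b1 c d e, EA.padd a1 b1 = some d ∧ EA.padd d c = some e ∧
    EA.padd a1 c = some a ∧ EA.padd b1 c = some b

def Additive (J : E → E) : Prop :=
  ∀ a b c, EA.padd a b = some c → EA.padd (J a) (J b) = some (J c)

def Retraction (J : E → E) : Prop :=
  EA.Additive J ∧ ∀ a, EA.le a (J EA.one) → J a = a

def Compression (J : E → E) : Prop :=
  EA.Retraction J ∧ ∀ a, (J a = EA.zero ↔ EA.le a (EA.compl (J EA.one)))

/-- `I` is a supplement of `J`: `Ker J = ran I` and `Ker I = ran J`. -/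
def Supplement (I J : E → E) : Prop :=
  (∀ a, J a = EA.zero ↔ ∃ b, I b = a) ∧ (∀ a, I a = EA.zero ↔ ∃ b, J b = a)

/-- the `n`-fold sum `n·a`, when defined. -/
def nsmulE : ℕ → E → Option E
  | 0, _ => some EA.zero
  | n + 1, a => (nsmulE n a).bind fun b => EA.padd a b

def ArchimedeanEA : Prop :=
  ∀ a : E, (∀ n : ℕ, ∃ b, EA.nsmulE n a = some b) → a = EA.zero

/-- a state on an effect algebra. -/
def IsState (s : E → ℝ) : Prop :=
  s EA.one = 1 ∧ (∀ a, 0 ≤ s a ∧ s a ≤ 1) ∧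
    ∀ a b c, EA.padd a b = some c → s c = s a + s b

noncomputable def partialSum (f : ℕ → E) : ℕ → E
  | 0 => EA.zero
  | n + 1 => EA.oplusD (partialSum f n) (f n)

/-- σ-additivity of a state: if all partial sums of an orthogonal sequence are defined
and the orthosum (= supremum of the partial sums) exists, the state is countably additive. -/
def SigmaAdditive (s : E → ℝ) : Prop :=
  ∀ f : ℕ → E, ∀ b : E,
    (∀ n, ∃ c, EA.padd (EA.partialSum f n) (f n) = some c) →
    (∀ n, EA.le (EA.partialSum f n) b) →
    (∀ c, (∀ n, EA.le (EA.partialSum f n) c) → EA.le b c) →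
    Filter.Tendsto (fun n => ∑ i ∈ Finset.range n, s (f i)) Filter.atTop (nhds (s b))

/-- A compression base: a family of compressions indexed by a sub-effect algebra `P`
such that each `p ∈ P` is the focus of `J p`, and Mackey compatible projections
compose to a projection. -/
structure CompressionBase {E : Type u} (EA : EffectAlgebra E) where
  P : Set E
  J : E → E → E
  sub : EA.SubEA P
  compr : ∀ p ∈ P, EA.Compression (J p)
  focus : ∀ p ∈ P, J p EA.one = p
  mackey : ∀ p ∈ P, ∀ q ∈ P, EA.Mackey p q → ∃ r ∈ P, J p ∘ J q = J r

variable (CB : CompressionBase EA)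

/-- `a ∈ C(p)`:  `a = J_p(a) ⊕ J_{p'}(a)`. -/
def inC (a p : E) : Prop :=
  EA.padd (CB.J p a) (CB.J (EA.compl p) a) = some a

/-- `PC(a) = {p ∈ P : a ∈ C(p)}`. -/
def PC (a : E) : Set E := {p | p ∈ CB.P ∧ inC EA CB a p}

/-- the bicommutant `P(a)`. -/
def bicomm (a : E) : Set E :=
  {p | p ∈ PC EA CB a ∧ ∀ q ∈ PC EA CB a, inC EA CB p q}

/-- `PC(A)` for a set `A ⊆ E`. -/
def PCset (A : Set E) : Set E := {p | p ∈ CB.P ∧ ∀ a ∈ A, inC EA CB a p}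

/-- `P(Q) = PC(PC(Q) ∪ Q)`. -/
def Pset (Q : Set E) : Set E := PCset EA CB (PCset EA CB Q ∪ Q)

/-- `P_≤(e,f)`. -/
def Ple (e f : E) : Set E :=
  {p | p ∈ Pset EA CB {e, f} ∧ EA.le (CB.J p e) (CB.J p f) ∧
    EA.le (CB.J (EA.compl p) f) (CB.J (EA.compl p) e)}

/-- a Boolean subalgebra of `P`: a sub-effect algebra of `E` contained in `P`
whose elements are pairwise Mackey compatible, with witnesses inside. -/
def BooleanSub (B : Set E) : Prop :=
  B ⊆ CB.P ∧ EA.SubEA B ∧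
    ∀ p ∈ B, ∀ q ∈ B, ∃ p1 ∈ B, ∃ q1 ∈ B, ∃ c ∈ B, ∃ d e,
      EA.padd p1 q1 = some d ∧ EA.padd d c = some e ∧
      EA.padd p1 c = some p ∧ EA.padd q1 c = some q

/-- `a` is a b-element with associated Boolean subalgebra `B`. -/
def IsBElementWith (a : E) (B : Set E) : Prop :=
  BooleanSub EA CB B ∧ ∀ p ∈ CB.P, (inC EA CB a p ↔ ∀ b ∈ B, inC EA CB b p)

def IsBElement (a : E) : Prop := ∃ B, IsBElementWith EA CB a B

def BProperty : Prop := ∀ a : E, IsBElement EA CB a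

/-- commuting of b-elements: `e C f` iff `P(e) ↔ P(f)`. -/
def CommuteEl (e f : E) : Prop :=
  ∀ p ∈ bicomm EA CB e, ∀ q ∈ bicomm EA CB f, EA.Mackey p q

def BComparability : Prop :=
  BProperty EA CB ∧ ∀ e f : E, CommuteEl EA CB e f → (Ple EA CB e f).Nonempty

def IsProjCover (a p : E) : Prop :=
  p ∈ CB.P ∧ ∀ q ∈ CB.P, (EA.le a q ↔ EA.le p q)

def ProjCoverProp : Prop := ∀ a : E, ∃ p, IsProjCover EA CB a p

def Spectral : Prop := ProjCoverProp EA CB ∧ BComparability EA CB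

/-- a block of `P`: a maximal set of pairwise Mackey compatible projections. -/
def IsBlock (B : Set E) : Prop :=
  B ⊆ CB.P ∧ (∀ p ∈ B, ∀ q ∈ B, EA.Mackey p q) ∧
    ∀ B' : Set E, B' ⊆ CB.P → (∀ p ∈ B', ∀ q ∈ B', EA.Mackey p q) → B ⊆ B' → B' = B

/-- the C-block `C(B)`. -/
def Cblock (B : Set E) : Set E := {a | ∀ p ∈ B, inC EA CB a p}

/-- `(f − e)_+` (the positive part, defined when `P_≤(e,f)` is nonempty). -/
noncomputable def posPart (e f : E) : E :=
  if h : (Ple EA CB e f).Nonempty then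
    EA.osub (CB.J h.some f) (CB.J h.some e)
  else EA.zero

noncomputable def projCover (a : E) : E :=
  if h : ∃ p, IsProjCover EA CB a p then h.choose else EA.zero

def IsMeetP (p q m : E) : Prop :=
  m ∈ CB.P ∧ EA.le m p ∧ EA.le m q ∧ ∀ s ∈ CB.P, EA.le s p → EA.le s q → EA.le s m

/-- `p ∧ q` in `P`. -/
noncomputable def pmeet (p q : E) : E :=
  if h : ∃ m, IsMeetP EA CB p q m then h.choose else EA.zero

/-- infimum of a set of projections in `P`. -/
def IsInfP (S : Set E) (m : E) : Prop :=
  m ∈ CB.P ∧ (∀ s ∈ S, EA.le m s) ∧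
    ∀ t ∈ CB.P, (∀ s ∈ S, EA.le t s) → EA.le t m

/-! Relative (to a projection `q`, i.e. computed in the interval `[0,q]`) notions. -/

def Pq (q : E) : Set E := {p | p ∈ CB.P ∧ EA.le p q}

def inCq (q a p : E) : Prop :=
  EA.padd (CB.J p a) (CB.J (EA.osub q p) a) = some a

def PCq (q a : E) : Set E := {p | p ∈ Pq EA CB q ∧ inCq EA CB q a p}

def bicommq (q a : E) : Set E :=
  {p | p ∈ PCq EA CB q a ∧ ∀ r ∈ PCq EA CB q a, inCq EA CB q p r}

def PCsetq (q : E) (A : Set E) : Set E :=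
  {p | p ∈ Pq EA CB q ∧ ∀ a ∈ A, inCq EA CB q a p}

def Psetq (q : E) (Q : Set E) : Set E := PCsetq EA CB q (PCsetq EA CB q Q ∪ Q)

def Pleq (q e f : E) : Set E :=
  {p | p ∈ Psetq EA CB q {e, f} ∧ EA.le (CB.J p e) (CB.J p f) ∧
    EA.le (CB.J (EA.osub q p) f) (CB.J (EA.osub q p) e)}

noncomputable def posPartq (q e f : E) : E :=
  if h : (Pleq EA CB q e f).Nonempty then
    EA.osub (CB.J h.some f) (CB.J h.some e)
  else EA.zero

def IsProjCoverq (q a p : E) : Prop :=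
  p ∈ Pq EA CB q ∧ ∀ s ∈ Pq EA CB q, (EA.le a s ↔ EA.le p s)

noncomputable def projCoverq (q a : E) : E :=
  if h : ∃ p, IsProjCoverq EA CB q a p then h.choose else EA.zero

def Mackeyq (q a b : E) : Prop :=
  ∃ a1 b1 c d e, EA.padd a1 b1 = some d ∧ EA.padd d c = some e ∧ EA.le e q ∧
    EA.padd a1 c = some a ∧ EA.padd b1 c = some b

def SubEAq (q : E) (F : Set E) : Prop :=
  EA.zero ∈ F ∧ q ∈ F ∧ (∀ x ∈ F, EA.osub q x ∈ F) ∧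
    ∀ x ∈ F, ∀ y ∈ F, ∀ z, EA.padd x y = some z → EA.le z q → z ∈ F

def BooleanSubq (q : E) (B : Set E) : Prop :=
  B ⊆ Pq EA CB q ∧ SubEAq EA q B ∧
    ∀ p ∈ B, ∀ r ∈ B, ∃ p1 ∈ B, ∃ r1 ∈ B, ∃ c ∈ B, ∃ d e,
      EA.padd p1 r1 = some d ∧ EA.padd d c = some e ∧ EA.le e q ∧
      EA.padd p1 c = some p ∧ EA.padd r1 c = some r

def IsBElementq (q a : E) : Prop :=
  ∃ B, BooleanSubq EA CB q B ∧
    ∀ p ∈ Pq EA CB q, (inCq EA CB q a p ↔ ∀ b ∈ B, inCq EA CB q b p)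

def BPropertyq (q : E) : Prop := ∀ a : E, EA.le a q → IsBElementq EA CB q a

def CommuteElq (q e f : E) : Prop :=
  ∀ p ∈ bicommq EA CB q e, ∀ r ∈ bicommq EA CB q f, Mackeyq EA q p r

def BComparabilityq (q : E) : Prop :=
  BPropertyq EA CB q ∧ ∀ e f : E, EA.le e q → EA.le f q →
    CommuteElq EA CB q e f → (Pleq EA CB q e f).Nonempty

/-! The binary spectral resolution. -/

/-- `λ(w) = Σ_j w_j 2^{-j}` (head of the list is the first digit). -/
def lamOf : List Bool → ℚ
  | [] => 0
  | b :: t => ((if b then 1 else 0) + lamOf t) / 2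

/-- all binary strings of length `n`, in lexicographic order. -/
def allStrings : ℕ → List (List Bool)
  | 0 => [[]]
  | n + 1 => (allStrings n).flatMap fun w => [w ++ [false], w ++ [true]]

noncomputable def listSum (l : List E) : E :=
  l.foldl (fun acc x => EA.oplusD acc x) EA.zero

/-- the families `(u_w, c_w)`; the binary string is given in reversed order
(head of the list is the last digit). -/
noncomputable def ucAux (a : E) : List Bool → E × E
  | [] => (projCover EA CB a, a)
  | bit :: t =>
      let p := ucAux a t
      let q := p.1
      let cw := p.2
      let cw' := EA.osub q cw
      let d := posPartq EA CB q cw' cw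
      let u0 := pmeet EA CB (EA.osub q (projCoverq EA CB q d)) q
      if bit then (pmeet EA CB q (EA.compl u0), d)
      else (u0, EA.oplusD (CB.J u0 cw) (CB.J u0 cw))

noncomputable def uw (a : E) (w : List Bool) : E := (ucAux EA CB a w.reverse).1

noncomputable def cw (a : E) (w : List Bool) : E := (ucAux EA CB a w.reverse).2

/-- the binary spectral projection `p_{a,λ(w1)}`. -/
noncomputable def pbin (a : E) (w : List Bool) : E :=
  listSum EA (EA.compl (projCover EA CB a) ::
    (((allStrings (w.length + 1)).filter
        fun v => lamOf v ≤ lamOf (w ++ [false])).map (uw EA CB a)))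

def Dyadic01 (x : ℚ) : Prop := ∃ n k : ℕ, (k : ℚ) ≤ 2 ^ n ∧ x = (k : ℚ) / 2 ^ n

/-- the binary spectral resolution `p_{a,λ}`, for dyadic rationals `λ ∈ [0,1]`. -/
noncomputable def pdyad (a : E) (x : ℚ) : E :=
  if x ≤ 0 then EA.compl (projCover EA CB a)
  else if 1 ≤ x then EA.one
  else if h : ∃ w : List Bool, lamOf (w ++ [true]) = x then pbin EA CB a h.choose
  else EA.zero

/-- the rational spectral resolution `p_{a,λ} = ⋀_{μ > λ, μ dyadic} p_{a,μ}`. -/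
noncomputable def ratRes (a : E) (x : ℚ) : E :=
  if h : ∃ m, IsInfP EA CB {y | ∃ μ, Dyadic01 μ ∧ x < μ ∧ y = pdyad EA CB a μ} m
  then h.choose else EA.zero

/-- the partial maps `f_0(b) = 2b`, `f_1(b) = (2b')'` computed in `[0,uu]`. -/
noncomputable def fstep (uu b : E) (bit : Bool) : Option E :=
  if bit then
    (if EA.le (EA.osub uu b) b
      then some (EA.osub uu (EA.oplusD (EA.osub uu b) (EA.osub uu b))) else none)
  else
    (if EA.le b (EA.osub uu b) then some (EA.oplusD b b) else none)

/-- `f_w = f_{w_n} ∘ ⋯ ∘ f_{w_1}`, computed in `[0,uu]`, as a partial map. -/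
noncomputable def fword (uu : E) (w : List Bool) (b : E) : Option E :=
  w.foldl (fun ob bit => ob.bind fun x => fstep EA uu x bit) (some b)

end EffectAlgebra


namespace EffectAlgebra

variable {E : Type u} (EA : EffectAlgebra E) (CB : CompressionBase EA)

lemma compl_spec (a : E) : EA.padd a (EA.compl a) = some EA.one :=
  (EA.orth_exists a).choose_spec

lemma one_padd_zero : EA.padd EA.one EA.zero = some EA.one := by
  obtain ⟨x, hx⟩ := EA.orth_exists EA.one
  have hx' : EA.padd x EA.one = some EA.one := (EA.comm x EA.one).trans hx
  have h0 := EA.add_one x EA.one hx'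
  rw [← h0]; exact hx

lemma padd_zero (a : E) : EA.padd a EA.zero = some a := by
  obtain ⟨y, hy⟩ := EA.orth_exists a
  have hy' : EA.padd y a = some EA.one := (EA.comm y a).trans hy
  obtain ⟨t, ht1, ht2⟩ := EA.assoc y a EA.zero EA.one EA.one hy' EA.one_padd_zero
  have h2 : t = a := EA.orth_unique y t a ht2 hy'
  rw [h2] at ht1; exact ht1

lemma zero_padd (a : E) : EA.padd EA.zero a = some a :=
  (EA.comm EA.zero a).trans (EA.padd_zero a)

lemma compl_compl (a : E) : EA.compl (EA.compl a) = a :=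
  EA.orth_unique (EA.compl a) _ a (EA.compl_spec _)
    ((EA.comm _ a).trans (EA.compl_spec a))

lemma le_compl {a b c : E} (h : EA.padd a b = some c) : EA.le b (EA.compl a) := by
  obtain ⟨t, ht1, ht2⟩ := EA.assoc a b (EA.compl c) c EA.one h (EA.compl_spec c)
  have : t = EA.compl a := EA.orth_unique a t _ ht2 (EA.compl_spec a)
  exact ⟨EA.compl c, this ▸ ht1⟩

lemma orth_of_le_compl {a b : E} (h : EA.le a (EA.compl b)) :
    ∃ t, EA.padd a b = some t := by
  obtain ⟨z, hz⟩ := h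
  have hz' : EA.padd z a = some (EA.compl b) := (EA.comm z a).trans hz
  obtain ⟨t, ht, -⟩ := EA.assoc z a b (EA.compl b) EA.one hz'
    ((EA.comm (EA.compl b) b).trans (EA.compl_spec b))
  exact ⟨t, ht⟩

/-- If `a` is Mackey compatible with `p ∈ P`, then `a ∈ C(p)`. -/
lemma inC_of_mackey {a p : E} (hp : p ∈ CB.P) (h : EA.Mackey a p) :
    inC EA CB a p := by
  obtain ⟨a1, p1, c, d, ee, hd, hee, ha, hpp⟩ := h
  have hp' : EA.compl p ∈ CB.P := CB.sub.2.2.1 p hp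
  have hcJ := CB.compr p hp
  have hcJ' := CB.compr (EA.compl p) hp'
  have hfoc := CB.focus p hp
  have hfoc' := CB.focus (EA.compl p) hp'
  -- a1 ⊕ p is defined
  obtain ⟨t, ht1, ht2⟩ := EA.assoc a1 p1 c d ee hd hee
  have htp : t = p := Option.some.inj (ht1.symm.trans hpp)
  rw [htp] at ht1 ht2
  -- a1 ≤ p'
  have ha1p' : EA.le a1 (EA.compl p) :=
    EA.le_compl ((EA.comm p a1).trans ht2)
  -- c ≤ p
  have hcp : EA.le c p := ⟨p1, (EA.comm c p1).trans hpp⟩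
  -- J_p a = c
  have hJa1 : CB.J p a1 = EA.zero := by
    refine (hcJ.2 a1).mpr ?_
    rw [hfoc]; exact ha1p'
  have hJc : CB.J p c = c := by
    refine hcJ.1.2 c ?_
    rw [hfoc]; exact hcp
  have hJa : CB.J p a = c := by
    have := hcJ.1.1 a1 c a ha
    rw [hJa1, hJc, EA.zero_padd] at this
    exact (Option.some.inj this).symm
  -- J_{p'} a = a1
  have hJ'a1 : CB.J (EA.compl p) a1 = a1 := by
    refine hcJ'.1.2 a1 ?_
    rw [hfoc']; exact ha1p'
  have hJ'c : CB.J (EA.compl p) c = EA.zero := by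
    refine (hcJ'.2 c).mpr ?_
    rw [hfoc', EA.compl_compl]; exact hcp
  have hJ'a : CB.J (EA.compl p) a = a1 := by
    have := hcJ'.1.1 a1 c a ha
    rw [hJ'a1, hJ'c, EA.padd_zero] at this
    exact (Option.some.inj this).symm
  unfold inC
  rw [hJa, hJ'a]
  exact (EA.comm c a1).trans ha

/-- If `a ∈ C(p)` for `p ∈ P`, then `a` is Mackey compatible with `p`. -/
lemma mackey_of_inC {a p : E} (hp : p ∈ CB.P) (h : inC EA CB a p) :
    EA.Mackey a p := by
  have hp' : EA.compl p ∈ CB.P := CB.sub.2.2.1 p hp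
  have hcJ := CB.compr p hp
  have hcJ' := CB.compr (EA.compl p) hp'
  have hfoc := CB.focus p hp
  have hfoc' := CB.focus (EA.compl p) hp'
  set c := CB.J p a with hc
  set a1 := CB.J (EA.compl p) a with ha1
  -- c ≤ p, with witness p1
  have hsum := hcJ.1.1 a (EA.compl a) EA.one (EA.compl_spec a)
  rw [hfoc] at hsum
  set p1 := CB.J p (EA.compl a) with hp1
  -- a1 ≤ p'
  have hsum' := hcJ'.1.1 a (EA.compl a) EA.one (EA.compl_spec a)
  rw [hfoc'] at hsum'
  have ha1le : EA.le a1 (EA.compl p) := ⟨_, hsum'⟩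
  obtain ⟨s, hs⟩ := EA.orth_of_le_compl ha1le
  -- reassociate: a1 ⊕ (c ⊕ p1) = s  ⟹  (a1 ⊕ p1) ⊕ c = s
  obtain ⟨t, ht1, ht2⟩ := EA.assoc c p1 a1 p s hsum ((EA.comm p a1).trans hs)
  refine ⟨a1, p1, c, t, s, (EA.comm a1 p1).trans ht1, (EA.comm t c).trans ht2,
    (EA.comm a1 c).trans h, (EA.comm p1 c).trans hsum⟩

lemma mackey_symm {a b : E} (h : EA.Mackey a b) : EA.Mackey b a := by
  obtain ⟨a1, b1, c, d, ee, h1, h2, h3, h4⟩ := h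
  exact ⟨b1, a1, c, d, ee, (EA.comm b1 a1).trans h1, h2, h4, h3⟩

end EffectAlgebra


open EffectAlgebra in
/-- for b-elements `e, f` with associated Boolean subalgebras `B(e), B(f)`:
`B(e) ↔ B(f)` iff `P(e) ↔ P(f)` (elementwise Mackey compatibility). -/
theorem statement4 {E : Type u} (EA : EffectAlgebra E) (CB : CompressionBase EA)
    (e f : E) (Be Bf : Set E)
    (he : IsBElementWith EA CB e Be) (hf : IsBElementWith EA CB f Bf) :
    (∀ p ∈ Be, ∀ q ∈ Bf, EA.Mackey p q) ↔
      (∀ p ∈ bicomm EA CB e, ∀ q ∈ bicomm EA CB f, EA.Mackey p q) := by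
  constructor
  · intro hBB p hpb q hqb
    obtain ⟨hpPC, hpall⟩ := hpb
    obtain ⟨hqPC, hqall⟩ := hqb
    have hpP : p ∈ CB.P := hpPC.1
    have hqP : q ∈ CB.P := hqPC.1
    -- every b' ∈ Bf is in PC(e)
    have hBfPC : ∀ b' ∈ Bf, b' ∈ PC EA CB e := by
      intro b' hb'
      have hb'P : b' ∈ CB.P := hf.1.1 hb'
      refine ⟨hb'P, (he.2 b' hb'P).mpr ?_⟩
      intro b hb
      exact inC_of_mackey EA CB hb'P (hBB b hb b' hb')
    -- p ∈ PC(f)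
    have hpPCf : p ∈ PC EA CB f := by
      refine ⟨hpP, (hf.2 p hpP).mpr ?_⟩
      intro b' hb'
      have h1 : inC EA CB p b' := hpall b' (hBfPC b' hb')
      have h2 : EA.Mackey p b' := mackey_of_inC EA CB (hf.1.1 hb') h1
      exact inC_of_mackey EA CB hpP (EA.mackey_symm h2)
    have h3 : inC EA CB q p := hqall p hpPCf
    exact EA.mackey_symm (mackey_of_inC EA CB hpP h3)
  · intro hPP b hb b' hb'
    have hbic : ∀ (a : E) (B : Set E), IsBElementWith EA CB a B →
        ∀ x ∈ B, x ∈ bicomm EA CB a := by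
      intro a B ha x hx
      have hxP : x ∈ CB.P := ha.1.1 hx
      have hxPC : x ∈ PC EA CB a := by
        refine ⟨hxP, (ha.2 x hxP).mpr ?_⟩
        intro y hy
        obtain ⟨p1, -, q1, -, c, -, d, ee, h1, h2, h3, h4⟩ := ha.1.2.2 y hy x hx
        exact inC_of_mackey EA CB hxP ⟨p1, q1, c, d, ee, h1, h2, h3, h4⟩
      refine ⟨hxPC, ?_⟩
      intro r hr
      exact (ha.2 r hr.1).mp hr.2 x hx
    exact hPP b (hbic e Be he b hb) b' (hbic f Bf hf b' hb')
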